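/- arXiv:2307.04347 — 2 statements merged into one kernel-verified Lean document; each statement's English description precedes it below -/
import Mathlib

section
/- (Gradient of the deduce loss, treating the binarization as the identity.) Let C be a CNF over atoms p_1,…,p_n with encoding matrix C, F a set of atoms with C ∪ F satisfiable and encoding f, and let v(t) ∈ ℝ^n be defined by v(t)[k] = t and v(t)[j] = v[j] for j ≠ k, where v = f + 1_{f=0}⊙b_p(x) ∈ {0,1}^n for some x ∈ [0,1]^n, and p_k ∉ F. Define L_deduce(t) = Σ_{i ∈ U} ∏_{j} (1 - L_{v(t)}[i,j]) where U indexes the clauses of C_deduce and L_{v(t)}[i,j] = 1_{C[i,j]=1}·v(t)[j] + 1_{C[i,j]=-1}·(1-v(t)[j]). Then dL_deduce/dt evaluated at t = v[k] equals -c if c > 0 clauses of C_deduce contain the literal p_k, equals c if c > 0 clauses of C_deduce contain ¬p_k, and equals 0 otherwise. -/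
/-!
In a deduce clause that mentions the atom `p_k ∉ F`, every other literal is `¬p` with `p ∈ F`,
hence false under `v`. The clause's product therefore collapses to the single factor
`1 - L_{v(t)}[i,k]`, which is affine in `t` with slope `-1` for the literal `p_k` and `+1` for
`¬p_k`; clauses not mentioning `p_k` are constant in `t`. A model of `C ∪ F` must satisfy every
deduce clause through its `p_k`-literal, so the two signs cannot both occur.
-/

open Finset

/-- The value `L_v[i,j]` of a literal with sign `c ∈ {-1, 0, 1}` on an atom with value `a`. -/
noncomputable def literalTruth (c a : ℝ) : ℝ :=
  (if c = 1 then 1 else 0) * a + (if c = -1 then 1 else 0) * (1 - a)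

noncomputable def literalSlope (c : ℝ) : ℝ :=
  (if c = -1 then 1 else 0) - (if c = 1 then 1 else 0)

lemma hasDerivAt_one_sub_literalTruth (c a : ℝ) :
    HasDerivAt (fun t => 1 - literalTruth c t) (literalSlope c) a := by
  have h := (((hasDerivAt_id a).const_mul (if c = 1 then (1 : ℝ) else 0)).add
    (((hasDerivAt_id a).const_sub 1).const_mul (if c = -1 then (1 : ℝ) else 0))).const_sub 1
  exact h.congr_deriv (by rw [literalSlope]; ring)

lemma literalSlope_zero : literalSlope 0 = 0 := by norm_num [literalSlope]

theorem Finset.insert_eq_of_card_eq_add_one {α : Type*} [DecidableEq α] {s t : Finset α} {k : α}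
    (hts : t ⊆ s) (hcard : #s = #t + 1) (hks : k ∈ s) (hkt : k ∉ t) : insert k t = s :=
  eq_of_subset_of_card_le (insert_subset hks hts) (by rw [card_insert_of_notMem hkt, hcard])

/-- Clause `c` belongs to `C_deduce` for the facts encoded by `f`: all of its literals but one
are `¬p` with `p ∈ F`. -/
def IsDeduceClause {ι : Type*} [Fintype ι] (f c : ι → ℝ) : Prop :=
  #{j | c j ≠ 0} = #{j | c j = -1 ∧ f j = 1} + 1

def Satisfies {ι : Type*} (w : ι → Bool) (c : ι → ℝ) : Prop :=
  ∃ j, (c j = 1 ∧ w j = true) ∨ (c j = -1 ∧ w j = false)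

section Clause

variable {ι : Type*} [Fintype ι] [DecidableEq ι]

lemma hasDerivAt_prod_one_sub_literalTruth_update (c w : ι → ℝ) (k : ι) (a : ℝ) :
    HasDerivAt (fun t => ∏ j, (1 - literalTruth (c j) (Function.update w k t j)))
      (literalSlope (c k) * ∏ j ∈ univ.erase k, (1 - literalTruth (c j) (w j))) a := by
  have hsplit : ∀ t, ∏ j, (1 - literalTruth (c j) (Function.update w k t j)) =
      (1 - literalTruth (c k) t) * ∏ j ∈ univ.erase k, (1 - literalTruth (c j) (w j)) := by
    intro t
    rw [← mul_prod_erase univ _ (mem_univ k), Function.update_self]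
    congr 1
    exact prod_congr rfl fun j hj => by rw [Function.update_of_ne (ne_of_mem_erase hj)]
  simp only [hsplit]
  exact (hasDerivAt_one_sub_literalTruth (c k) a).mul_const _

namespace IsDeduceClause

variable {f c : ι → ℝ} {k : ι}

lemma eq_neg_one_of_ne (hc : IsDeduceClause f c) (hk : f k ≠ 1) (hck : c k ≠ 0) {j : ι}
    (hjk : j ≠ k) (hj : c j ≠ 0) : c j = -1 ∧ f j = 1 := by
  have hfacts : insert k ({j | c j = -1 ∧ f j = 1} : Finset ι) = ({j | c j ≠ 0} : Finset ι) := by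
    refine insert_eq_of_card_eq_add_one (fun j hj => ?_) hc (by simpa using hck) (by simp [hk])
    simp only [mem_filter, mem_univ, true_and] at hj ⊢
    norm_num [hj.1]
  have hjmem : j ∈ insert k ({j | c j = -1 ∧ f j = 1} : Finset ι) := by
    rw [hfacts]
    simpa using hj
  simpa [hjk] using hjmem

lemma literalTruth_eq_zero_of_ne (hc : IsDeduceClause f c) (hk : f k ≠ 1) (hck : c k ≠ 0)
    {v : ι → ℝ} (hv : ∀ j, f j = 1 → v j = 1) {j : ι} (hjk : j ≠ k) :
    literalTruth (c j) (v j) = 0 := by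
  by_cases hj : c j = 0
  · simp [literalTruth, hj]
  · obtain ⟨hcj, hfj⟩ := hc.eq_neg_one_of_ne hk hck hjk hj
    norm_num [literalTruth, hcj, hv j hfj]

lemma hasDerivAt (hc : IsDeduceClause f c) (hk : f k ≠ 1) {v : ι → ℝ}
    (hv : ∀ j, f j = 1 → v j = 1) (a : ℝ) :
    HasDerivAt (fun t => ∏ j, (1 - literalTruth (c j) (Function.update v k t j)))
      (literalSlope (c k)) a := by
  convert hasDerivAt_prod_one_sub_literalTruth_update c v k a using 1
  by_cases hck : c k = 0
  · simp [hck, literalSlope_zero]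
  · rw [prod_eq_one fun j hj => by
      rw [hc.literalTruth_eq_zero_of_ne hk hck hv (ne_of_mem_erase hj), sub_zero], mul_one]

lemma satisfies_at (hc : IsDeduceClause f c) (hk : f k ≠ 1) (hck : c k ≠ 0) {w : ι → Bool}
    (hwf : ∀ j, f j = 1 → w j = true) (hw : Satisfies w c) :
    (c k = 1 ∧ w k = true) ∨ (c k = -1 ∧ w k = false) := by
  obtain ⟨j, hj⟩ := hw
  by_cases hjk : j = k
  · exact hjk ▸ hj
  have hcj0 : c j ≠ 0 := by rcases hj with ⟨h, -⟩ | ⟨h, -⟩ <;> norm_num [h]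
  obtain ⟨hcj, hfj⟩ := hc.eq_neg_one_of_ne hk hck hjk hcj0
  rcases hj with ⟨h, -⟩ | ⟨-, h⟩
  · norm_num [hcj] at h
  · simp [hwf j hfj] at h

end IsDeduceClause

lemma card_pos_eq_zero_or_card_neg_eq_zero {κ : Type*} {C : κ → ι → ℝ} {f : ι → ℝ}
    {U : Finset κ} (hU : ∀ i ∈ U, IsDeduceClause f (C i)) {k : ι} (hk : f k ≠ 1)
    {w : ι → Bool} (hwf : ∀ j, f j = 1 → w j = true) (hw : ∀ i, Satisfies w (C i)) :
    #{i ∈ U | C i k = 1} = 0 ∨ #{i ∈ U | C i k = -1} = 0 := by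
  by_contra! hboth
  obtain ⟨i, hi⟩ := card_ne_zero.mp hboth.1
  obtain ⟨i', hi'⟩ := card_ne_zero.mp hboth.2
  rw [mem_filter] at hi hi'
  have htrue := (hU i hi.1).satisfies_at hk (by norm_num [hi.2]) hwf (hw i)
  have hfalse := (hU i' hi'.1).satisfies_at hk (by norm_num [hi'.2]) hwf (hw i')
  norm_num [hi.2, hi'.2] at htrue hfalse
  simp [htrue] at hfalse

end Clause

lemma sum_literalSlope {κ ι : Type*} (C : κ → ι → ℝ) (U : Finset κ) (k : ι) :
    ∑ i ∈ U, literalSlope (C i k) = (#{i ∈ U | C i k = -1} : ℝ) - #{i ∈ U | C i k = 1} := by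
  simp only [literalSlope, sum_sub_distrib, sum_boole]

lemma natCast_sub_eq_ite {a b : ℕ} (h : a = 0 ∨ b = 0) :
    (b : ℝ) - a = if 0 < a then -(a : ℝ) else if 0 < b then (b : ℝ) else 0 := by
  rcases h with rfl | rfl <;> split_ifs <;> simp_all

theorem deduce_loss_gradient_general {m n : ℕ} (C : Fin m → Fin n → ℝ) (f x : Fin n → ℝ)
    (hsat : ∃ w : Fin n → Bool, (∀ j, f j = 1 → w j = true) ∧
      ∀ i, ∃ j, (C i j = 1 ∧ w j = true) ∨ (C i j = -1 ∧ w j = false))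
    (k : Fin n) (hk : f k = 0)
    (v : Fin n → ℝ)
    (hv : ∀ j, v j = f j + (if f j = 0 then (1 : ℝ) else 0) *
      (if (1 : ℝ) / 2 ≤ x j then 1 else 0))
    (U : Finset (Fin m))
    (hU : ∀ i, i ∈ U ↔ (Finset.univ.filter fun j => C i j ≠ 0).card =
      (Finset.univ.filter fun j => C i j = -1 ∧ f j = 1).card + 1)
    (cpos cneg : ℕ)
    (hcpos : cpos = (U.filter fun i => C i k = 1).card)
    (hcneg : cneg = (U.filter fun i => C i k = -1).card) :
    HasDerivAt
      (fun t : ℝ => ∑ i ∈ U, ∏ j,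
        (1 - ((if C i j = 1 then (1 : ℝ) else 0) * Function.update v k t j +
              (if C i j = -1 then (1 : ℝ) else 0) * (1 - Function.update v k t j))))
      (if 0 < cpos then -(cpos : ℝ) else if 0 < cneg then (cneg : ℝ) else 0)
      (v k) := by
  obtain ⟨w, hwf, hw⟩ := hsat
  have hkF : f k ≠ 1 := by norm_num [hk]
  have hvF : ∀ j, f j = 1 → v j = 1 := fun j hj => by norm_num [hv j, hj]
  have hdeduce : ∀ i ∈ U, IsDeduceClause f (C i) := fun i hi => (hU i).mp hi
  have hderiv := HasDerivAt.fun_sum fun i hi => (hdeduce i hi).hasDerivAt hkF hvF (v k)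
  rw [sum_literalSlope] at hderiv
  subst hcpos hcneg
  rw [← natCast_sub_eq_ite (card_pos_eq_zero_or_card_neg_eq_zero hdeduce hkF hwf hw)]
  exact hderiv

theorem deduce_loss_gradient {m n : ℕ} (C : Fin m → Fin n → ℝ) (f x : Fin n → ℝ)
    (hC : ∀ i j, C i j = -1 ∨ C i j = 0 ∨ C i j = 1)
    (hf : ∀ j, f j = 0 ∨ f j = 1)
    (hx : ∀ j, x j ∈ Set.Icc (0 : ℝ) 1)
    (hsat : ∃ w : Fin n → Bool, (∀ j, f j = 1 → w j = true) ∧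
      ∀ i, ∃ j, (C i j = 1 ∧ w j = true) ∨ (C i j = -1 ∧ w j = false))
    (k : Fin n) (hk : f k = 0)
    (v : Fin n → ℝ)
    (hv : ∀ j, v j = f j + (if f j = 0 then (1 : ℝ) else 0) *
      (if (1 : ℝ) / 2 ≤ x j then 1 else 0))
    (U : Finset (Fin m))
    (hU : ∀ i, i ∈ U ↔ (Finset.univ.filter fun j => C i j ≠ 0).card =
      (Finset.univ.filter fun j => C i j = -1 ∧ f j = 1).card + 1)
    (cpos cneg : ℕ)
    (hcpos : cpos = (U.filter fun i => C i k = 1).card)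
    (hcneg : cneg = (U.filter fun i => C i k = -1).card) :
    HasDerivAt
      (fun t : ℝ => ∑ i ∈ U, ∏ j,
        (1 - ((if C i j = 1 then (1 : ℝ) else 0) * Function.update v k t j +
              (if C i j = -1 then (1 : ℝ) else 0) * (1 - Function.update v k t j))))
      (if 0 < cpos then -(cpos : ℝ) else if 0 < cneg then (cneg : ℝ) else 0)
      (v k) :=
  deduce_loss_gradient_general C f x hsat k hk v hv U hU cpos cneg hcpos hcneg
end

section
/- (Gradient of the unsat loss, treating the binarization as the identity.) In the setting above with p_k ∉ F, let U ⊆ {1,…,m} be the set of indices of clauses of C falsified by the assignment v, and define L_unsat(t) = (1/m)·Σ_{i ∈ U} ∏_j (1 - L_{v(t)}[i,j]) with v(t) as above. Then dL_unsat/dt at t = v[k] equals (c₂ - c₁)/m, where c₁ (resp. c₂) is the number of falsified clauses containing the literal p_k (resp. ¬p_k). -/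
/-!
On a falsified clause every literal has value `0` at `v`, so in the product `∏ⱼ (1 - L[i,j])`
every factor except the one of `p_k` equals `1`. Each summand is therefore an affine function
of `t` with slope `-1`, `+1` or `0` according as the clause contains `p_k`, `¬p_k` or neither;
summing over the falsified clauses counts `c₂ - c₁`.
-/

open Finset

/-- The value `L[i,j]` of the literal of atom `j` in clause `i`, where the clause matrix entry `c`
is `1` for `p_j`, `-1` for `¬p_j` and `0` when the atom does not occur. -/
noncomputable def literalValue (c y : ℝ) : ℝ :=
  (if c = 1 then 1 else 0) * y + (if c = -1 then 1 else 0) * (1 - y)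

theorem hasDerivAt_literalValue (c y : ℝ) :
    HasDerivAt (literalValue c) ((if c = 1 then 1 else 0) - (if c = -1 then 1 else 0)) y := by
  have h := ((hasDerivAt_id y).const_mul (if c = 1 then (1 : ℝ) else 0)).add
    (((hasDerivAt_const y (1 : ℝ)).sub (hasDerivAt_id y)).const_mul
      (if c = -1 then (1 : ℝ) else 0))
  exact h.congr_deriv (by ring)

theorem literalValue_eq_zero {c y : ℝ} (hy : y = 0 ∨ y = 1)
    (hfalse : ¬((c = 1 ∧ y = 1) ∨ (c = -1 ∧ y = 0))) : literalValue c y = 0 := by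
  push Not at hfalse
  by_cases hc : c = 1
  · norm_num [literalValue, hc, hy.resolve_right (hfalse.1 hc)]
  by_cases hc' : c = -1
  · norm_num [literalValue, hc', hy.resolve_left (hfalse.2 hc')]
  simp [literalValue, hc, hc']

theorem hasDerivAt_prod_update {ι : Type*} [Fintype ι] [DecidableEq ι] (g : ι → ℝ → ℝ)
    (v : ι → ℝ) (k : ι) {g' t : ℝ} (hg : HasDerivAt (g k) g' t) :
    HasDerivAt (fun s => ∏ j, g j (Function.update v k s j))
      ((∏ j ∈ univ.erase k, g j (v j)) * g') t := by
  have hsplit : (fun s => ∏ j, g j (Function.update v k s j)) =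
      fun s => (∏ j ∈ univ.erase k, g j (v j)) * g k s := by
    funext s
    rw [← mul_prod_erase univ _ (mem_univ k), Function.update_self, mul_comm]
    congr 1
    exact prod_congr rfl fun j hj => by rw [Function.update_of_ne (ne_of_mem_erase hj)]
  rw [hsplit]
  exact hg.const_mul _

theorem unsat_loss_gradient_general {m n : ℕ} (C : Fin m → Fin n → ℝ) (f x : Fin n → ℝ)
    (hf : ∀ j, f j = 0 ∨ f j = 1)
    (k : Fin n)
    (v : Fin n → ℝ)
    (hv : ∀ j, v j = f j + (if f j = 0 then (1 : ℝ) else 0) *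
      (if (1 : ℝ) / 2 ≤ x j then 1 else 0))
    (U : Finset (Fin m))
    (hU : ∀ i, i ∈ U ↔ ¬ ∃ j, (C i j = 1 ∧ v j = 1) ∨ (C i j = -1 ∧ v j = 0))
    (c₁ c₂ : ℕ)
    (hc₁ : c₁ = (U.filter fun i => C i k = 1).card)
    (hc₂ : c₂ = (U.filter fun i => C i k = -1).card) :
    HasDerivAt
      (fun t : ℝ => (1 / (m : ℝ)) * ∑ i ∈ U, ∏ j,
        (1 - ((if C i j = 1 then (1 : ℝ) else 0) * Function.update v k t j +
              (if C i j = -1 then (1 : ℝ) else 0) * (1 - Function.update v k t j))))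
      (((c₂ : ℝ) - c₁) / m) (v k) := by
  have hv_binary : ∀ j, v j = 0 ∨ v j = 1 := fun j => by
    rcases hf j with h | h
    · rw [hv j, h, if_pos rfl]
      split_ifs <;> norm_num
    · norm_num [hv j, h]
  have hclause : ∀ i ∈ U, HasDerivAt
      (fun t => ∏ j, (1 - literalValue (C i j) (Function.update v k t j)))
      ((if C i k = -1 then 1 else 0) - (if C i k = 1 then 1 else 0)) (v k) := by
    intro i hi
    have hfalse : ∀ j, literalValue (C i j) (v j) = 0 := fun j =>
      literalValue_eq_zero (hv_binary j) fun h => (hU i).mp hi ⟨j, h⟩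
    have h := hasDerivAt_prod_update (fun j y => 1 - literalValue (C i j) y) v k
      ((hasDerivAt_literalValue (C i k) (v k)).const_sub 1)
    simp only [hfalse, sub_zero, prod_const_one, one_mul] at h
    exact h.congr_deriv (by ring)
  refine ((HasDerivAt.fun_sum hclause).const_mul (1 / (m : ℝ))).congr_deriv ?_
  rw [hc₁, hc₂, sum_sub_distrib, sum_boole, sum_boole]
  ring

theorem unsat_loss_gradient {m n : ℕ} (C : Fin m → Fin n → ℝ) (f x : Fin n → ℝ)
    (hC : ∀ i j, C i j = -1 ∨ C i j = 0 ∨ C i j = 1)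
    (hf : ∀ j, f j = 0 ∨ f j = 1)
    (hx : ∀ j, x j ∈ Set.Icc (0 : ℝ) 1)
    (k : Fin n) (hk : f k = 0)
    (v : Fin n → ℝ)
    (hv : ∀ j, v j = f j + (if f j = 0 then (1 : ℝ) else 0) *
      (if (1 : ℝ) / 2 ≤ x j then 1 else 0))
    (U : Finset (Fin m))
    (hU : ∀ i, i ∈ U ↔ ¬ ∃ j, (C i j = 1 ∧ v j = 1) ∨ (C i j = -1 ∧ v j = 0))
    (c₁ c₂ : ℕ)
    (hc₁ : c₁ = (U.filter fun i => C i k = 1).card)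
    (hc₂ : c₂ = (U.filter fun i => C i k = -1).card) :
    HasDerivAt
      (fun t : ℝ => (1 / (m : ℝ)) * ∑ i ∈ U, ∏ j,
        (1 - ((if C i j = 1 then (1 : ℝ) else 0) * Function.update v k t j +
              (if C i j = -1 then (1 : ℝ) else 0) * (1 - Function.update v k t j))))
      (((c₂ : ℝ) - c₁) / m) (v k) :=
  unsat_loss_gradient_general C f x hf k v hv U hU c₁ c₂ hc₁ hc₂
end
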